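/- If Λ is a word in the alphabet {0, 1, y, y⁻¹} with no potential cancellations and containing n occurrences of y or y⁻¹, then there exists a finite binary word u such that the concatenation Λ·u can be advanced (by repeated application of the rewriting rules) to a word of the form s·yⁿ for some finite binary word s. -/

import Mathlib

/-!
A letter y± moving right through a binary word behaves like a four-state transducer: its state is
its sign, possibly together with one bit it is stuck in front of. The letters are parked at the
right end from the last one to the first. When the letters after a given one have become yᵐ and
left bits `E` behind, that letter faces its gap followed by `E`. Having no potential cancellation
means that it does not cross its gap as a clean letter of sign opposite to its successor's, and
this survives appending the bits its successor emits; hence it does not come out as a clean y⁻¹,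
and at most one extra 0 makes it come out as a clean y. That 0 is supplied by appending 2ᵐ zeros
at the end, which y00 → 0y halves m times on their way through yᵐ.
-/

/-- The alphabet {0, 1, y, y⁻¹}. -/
inductive YSym : Type
  | b0 : YSym
  | b1 : YSym
  | yp : YSym
  | ym : YSym
deriving DecidableEq

/-- Whether a symbol is y or y⁻¹. -/
def isY : YSym → Bool
  | YSym.yp => true
  | YSym.ym => true
  | _ => false

/-- The six advancement rules: y00→0y, y01→10y⁻¹, y1→11y,
y⁻¹0→00y⁻¹, y⁻¹10→01y, y⁻¹11→1y⁻¹. -/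
inductive Rule : List YSym → List YSym → Prop
  | r1 : Rule [YSym.yp, YSym.b0, YSym.b0] [YSym.b0, YSym.yp]
  | r2 : Rule [YSym.yp, YSym.b0, YSym.b1] [YSym.b1, YSym.b0, YSym.ym]
  | r3 : Rule [YSym.yp, YSym.b1] [YSym.b1, YSym.b1, YSym.yp]
  | r4 : Rule [YSym.ym, YSym.b0] [YSym.b0, YSym.b0, YSym.ym]
  | r5 : Rule [YSym.ym, YSym.b1, YSym.b0] [YSym.b0, YSym.b1, YSym.yp]
  | r6 : Rule [YSym.ym, YSym.b1, YSym.b1] [YSym.b1, YSym.ym]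

/-- Advancing the i-th occurrence of y or y⁻¹ in a word. -/
def AdvanceAt (i : ℕ) (w w' : List YSym) : Prop :=
  ∃ u l r v, Rule l r ∧ w = u ++ l ++ v ∧ w' = u ++ r ++ v ∧
    u.countP (fun a => isY a) = i

/-- Advancing some occurrence of y or y⁻¹. -/
def Advance (w w' : List YSym) : Prop := ∃ i, AdvanceAt i w w'

/-- The word contains an adjacent pair y y⁻¹ or y⁻¹ y. -/
def HasCancel (w : List YSym) : Prop :=
  ∃ u v, w = u ++ [YSym.yp, YSym.ym] ++ v ∨ w = u ++ [YSym.ym, YSym.yp] ++ v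

/-- The i-th occurrence of y± in w is a potential cancellation. -/
def PotentialCancellation (i : ℕ) (w : List YSym) : Prop :=
  ∃ w', Relation.ReflTransGen (AdvanceAt i) w w' ∧ HasCancel w'

/-- The inclusion of finite binary words into words over {0, 1, y, y⁻¹}. -/
def ofBits (u : List Bool) : List YSym :=
  u.map (fun b => if b then YSym.b1 else YSym.b0)

open Relation

def ySym : Bool → YSym
  | true => YSym.yp
  | false => YSym.ym

/-- A letter y (sign `true`) or y⁻¹ (sign `false`) advanced through a binary word as far as the
rules allow: its final sign and the bits it is stuck in front of (a lone 0 after y, a lone 1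
after y⁻¹). `yOut` gives the bits it leaves behind. -/
def yRun : Bool → List Bool → Bool × List Bool
  | s, [] => (s, [])
  | true, [false] => (true, [false])
  | true, false :: false :: t => yRun true t
  | true, false :: true :: t => yRun false t
  | true, true :: t => yRun true t
  | false, false :: t => yRun false t
  | false, [true] => (false, [true])
  | false, true :: false :: t => yRun true t
  | false, true :: true :: t => yRun false t

def yOut : Bool → List Bool → List Bool
  | _, [] => []
  | true, [false] => []
  | true, false :: false :: t => false :: yOut true t
  | true, false :: true :: t => true :: false :: yOut false t
  | true, true :: t => true :: true :: yOut true t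
  | false, false :: t => false :: false :: yOut false t
  | false, [true] => []
  | false, true :: false :: t => false :: true :: yOut true t
  | false, true :: true :: t => true :: yOut false t

theorem yRun_append (s : Bool) (w z : List Bool) :
    yRun s (w ++ z) = yRun (yRun s w).1 ((yRun s w).2 ++ z) := by
  induction s, w using yRun.induct <;> simp_all [yRun]

theorem yRun_cases (s : Bool) (w : List Bool) :
    (yRun s w).2 = [] ∨ yRun s w = (true, [false]) ∨ yRun s w = (false, [true]) := by
  induction s, w using yRun.induct <;> simp_all [yRun]

/-- A letter of sign `a` crossing `h` does not arrive next to a following letter of sign `b`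
with the opposite sign. -/
def NoClash (a : Bool) (h : List Bool) (b : Bool) : Prop :=
  (yRun a h).2 = [] → (yRun a h).1 = b

instance (a : Bool) (h : List Bool) (b : Bool) : Decidable (NoClash a h b) := by
  unfold NoClash; infer_instance

/-- A letter that does not clash with `b` after `h` is either clean of sign `b` or stuck in front
of a lone bit, so these three cases of `he` cover every way it can go on through `e`. -/
theorem NoClash.append {a b b' : Bool} {h e : List Bool}
    (he : NoClash b e b' ∧ NoClash true (false :: e) b' ∧ NoClash false (true :: e) b')
    (hc : NoClash a h b) : NoClash a (h ++ e) b' := by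
  obtain ⟨hb, h0, h1⟩ := he
  unfold NoClash at *
  rw [yRun_append]
  rcases yRun_cases a h with hr | hr | hr
  · simpa [hr, hc hr] using hb
  · simpa [hr] using h0
  · simpa [hr] using h1

theorem NoClash.append_yOut {a b : Bool} {h z : List Bool} (hc : NoClash a h b)
    (hz : (yRun b z).2 = []) : NoClash a (h ++ yOut b z) (yRun b z).1 := by
  induction b, z using yRun.induct generalizing h <;> simp only [yRun, yOut] at hz ⊢
  case case1 => simpa using hc
  case case2 | case7 => simp at hz
  case case3 t ih => simpa using ih (NoClash.append (e := [false]) (by decide) hc) hz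
  case case4 t ih => simpa using ih (NoClash.append (e := [true, false]) (by decide) hc) hz
  case case5 t ih => simpa using ih (NoClash.append (e := [true, true]) (by decide) hc) hz
  case case6 t ih => simpa using ih (NoClash.append (e := [false, false]) (by decide) hc) hz
  case case8 t ih => simpa using ih (NoClash.append (e := [false, true]) (by decide) hc) hz
  case case9 t ih => simpa using ih (NoClash.append (e := [true]) (by decide) hc) hz

@[simp] theorem countP_isY_ofBits (p : List Bool) : (ofBits p).countP (fun a => isY a) = 0 := by
  simp [ofBits, List.countP_eq_zero, isY]

theorem Rule.advanceAt_zero {l r : List YSym} (h : Rule l r) (v : List YSym) :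
    AdvanceAt 0 (l ++ v) (r ++ v) :=
  ⟨[], l, r, v, h, rfl, rfl, rfl⟩

theorem AdvanceAt.frame {i : ℕ} {w w' : List YSym} (h : AdvanceAt i w w') (P V : List YSym) :
    AdvanceAt (P.countP (fun a => isY a) + i) (P ++ w ++ V) (P ++ w' ++ V) := by
  obtain ⟨u, l, r, v, hr, rfl, rfl, rfl⟩ := h
  exact ⟨P ++ u, l, r, v ++ V, hr, by simp, by simp, List.countP_append ..⟩

theorem reflTransGen_advanceAt_frame {i : ℕ} {w w' : List YSym}
    (h : ReflTransGen (AdvanceAt i) w w') (P V : List YSym) :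
    ReflTransGen (AdvanceAt (P.countP (fun a => isY a) + i)) (P ++ w ++ V) (P ++ w' ++ V) :=
  h.lift (fun x => P ++ x ++ V) fun _ _ hx => hx.frame P V

theorem reflTransGen_advance_frame {w w' : List YSym} (h : ReflTransGen Advance w w')
    (P V : List YSym) : ReflTransGen Advance (P ++ w ++ V) (P ++ w' ++ V) :=
  h.lift (fun x => P ++ x ++ V) fun _ _ ⟨_, hx⟩ => ⟨_, hx.frame P V⟩

theorem reflTransGen_advanceAt_ofBits_append {i : ℕ} {w w' : List YSym}
    (h : ReflTransGen (AdvanceAt i) w w') (p : List Bool) :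
    ReflTransGen (AdvanceAt i) (ofBits p ++ w) (ofBits p ++ w') := by
  simpa using reflTransGen_advanceAt_frame h (ofBits p) []

theorem reflTransGen_advanceAt_zero_yRun (s : Bool) (w : List Bool) :
    ReflTransGen (AdvanceAt 0) (ySym s :: ofBits w)
      (ofBits (yOut s w) ++ ySym (yRun s w).1 :: ofBits (yRun s w).2) := by
  induction s, w using yRun.induct <;> simp only [yRun, yOut]
  case case1 | case2 | case7 => exact .refl
  case case3 t ih =>
    exact .head (Rule.r1.advanceAt_zero _) (reflTransGen_advanceAt_ofBits_append ih [false])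
  case case4 t ih =>
    exact .head (Rule.r2.advanceAt_zero _) (reflTransGen_advanceAt_ofBits_append ih [true, false])
  case case5 t ih =>
    exact .head (Rule.r3.advanceAt_zero _) (reflTransGen_advanceAt_ofBits_append ih [true, true])
  case case6 t ih =>
    exact .head (Rule.r4.advanceAt_zero _) (reflTransGen_advanceAt_ofBits_append ih [false, false])
  case case8 t ih =>
    exact .head (Rule.r5.advanceAt_zero _) (reflTransGen_advanceAt_ofBits_append ih [false, true])
  case case9 t ih =>
    exact .head (Rule.r6.advanceAt_zero _) (reflTransGen_advanceAt_ofBits_append ih [true])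

theorem reflTransGen_advance_yRun (s : Bool) (w : List Bool) (P V : List YSym) :
    ReflTransGen Advance (P ++ ySym s :: ofBits w ++ V)
      (P ++ ofBits (yOut s w) ++ ySym (yRun s w).1 :: ofBits (yRun s w).2 ++ V) := by
  simpa using reflTransGen_advance_frame
    (ReflTransGen.mono (fun _ _ h => ⟨0, h⟩) _ _ (reflTransGen_advanceAt_zero_yRun s w)) P V

theorem yRun_true_replicate_false (k : ℕ) :
    yRun true (List.replicate (2 * k) false) = (true, []) ∧
      yOut true (List.replicate (2 * k) false) = List.replicate k false := by
  induction k with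
  | zero => simp [yRun, yOut]
  | succ k ih => simpa [Nat.mul_succ, List.replicate_succ, yRun, yOut] using ih

/-- Each letter y halves a run of zeros, by y00 → 0y. -/
theorem reflTransGen_advance_replicate_yp (n k : ℕ) :
    ReflTransGen Advance (List.replicate n YSym.yp ++ ofBits (List.replicate (2 ^ n * k) false))
      (ofBits (List.replicate k false) ++ List.replicate n YSym.yp) := by
  induction n with
  | zero => simpa using .refl
  | succ n ih =>
    obtain ⟨hrun, hout⟩ := yRun_true_replicate_false (2 ^ n * k)
    have hlast := reflTransGen_advance_yRun true (List.replicate (2 * (2 ^ n * k)) false)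
      (List.replicate n YSym.yp) []
    rw [hrun, hout] at hlast
    refine .trans (b := List.replicate n YSym.yp ++ ofBits (List.replicate (2 ^ n * k) false)
      ++ [YSym.yp]) ?_
      (by simpa [List.replicate_succ'] using reflTransGen_advance_frame ih [] [YSym.yp])
    simpa [List.replicate_succ', pow_succ, mul_comm, mul_left_comm, ySym, ofBits] using hlast

/-- `toWord g₀ [(b₁, g₁), …, (bₙ, gₙ)]` is the word g₀ y^{±1} g₁ ⋯ y^{±1} gₙ, with the sign of
the i-th letter given by `bᵢ`. -/
def toWord (g₀ : List Bool) : List (Bool × List Bool) → List YSym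
  | [] => ofBits g₀
  | (b, g) :: L => ofBits g₀ ++ ySym b :: toWord g L

theorem exists_yRun_append_replicate_eq {b : Bool} {w : List Bool} (hc : NoClash b w true) :
    ∃ z, yRun b (w ++ List.replicate z false) = (true, []) := by
  rw [NoClash] at hc
  rcases yRun_cases b w with hr | hr | hr
  · exact ⟨0, by simpa using Prod.ext (hc hr) hr⟩
  all_goals exact ⟨1, by simp [yRun_append, hr, yRun]⟩

theorem exists_yRun_append_eq (b : Bool) (w : List Bool) :
    ∃ ext, yRun b (w ++ ext) = (true, []) := by
  by_cases hc : NoClash b w true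
  · obtain ⟨z, hz⟩ := exists_yRun_append_replicate_eq hc
    exact ⟨_, hz⟩
  · rw [NoClash, Classical.not_imp, Bool.not_eq_true] at hc
    have hr : yRun b w = (false, []) := Prod.ext hc.2 hc.1
    exact ⟨[true, false], by rw [yRun_append, hr]; rfl⟩

theorem reflTransGen_advance_toWord_cons {b : Bool} {g u E ext t : List Bool}
    {L : List (Bool × List Bool)}
    (hL : ∀ g₀, ReflTransGen Advance (toWord g₀ L ++ ofBits u)
      (ofBits (g₀ ++ E) ++ List.replicate L.length YSym.yp))
    (ht : ReflTransGen Advance (List.replicate L.length YSym.yp ++ ofBits t)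
      (ofBits ext ++ List.replicate L.length YSym.yp))
    (hrun : yRun b (g ++ E ++ ext) = (true, [])) (g₀ : List Bool) :
    ReflTransGen Advance (toWord g₀ ((b, g) :: L) ++ ofBits (u ++ t))
      (ofBits (g₀ ++ yOut b (g ++ E ++ ext)) ++ List.replicate (L.length + 1) YSym.yp) := by
  have hrest := reflTransGen_advance_frame (hL g) (ofBits g₀ ++ [ySym b]) (ofBits t)
  have hpad := reflTransGen_advance_frame ht (ofBits g₀ ++ [ySym b] ++ ofBits (g ++ E)) []
  have hhead := reflTransGen_advance_yRun b (g ++ E ++ ext) (ofBits g₀)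
    (List.replicate L.length YSym.yp)
  rw [hrun] at hhead
  simp only [toWord, ofBits, List.map_append, List.append_assoc, List.append_nil] at *
  exact (hrest.trans hpad).trans (by simpa [List.replicate_succ, ySym] using hhead)

-- The second conjunct, the invariant of the induction, says that the bits `E` left behind by
-- the parked letters never create a clash for a letter in front of them.
theorem exists_advance_toWord {L : List (Bool × List Bool)}
    (hL : L.IsChain fun x y => NoClash x.1 x.2 y.1) :
    ∃ u E : List Bool,
      (∀ g₀, ReflTransGen Advance (toWord g₀ L ++ ofBits u)
        (ofBits (g₀ ++ E) ++ List.replicate L.length YSym.yp)) ∧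
      ∀ x ∈ L.head?, ∀ a h, NoClash a h x.1 → NoClash a (h ++ E) true := by
  induction L with
  | nil => exact ⟨[], [], fun g₀ => by simpa [toWord, ofBits] using .refl, by simp⟩
  | cons x L ih =>
    obtain ⟨b, g⟩ := x
    obtain ⟨u, E, hmove, hE⟩ := ih hL.tail
    obtain ⟨ext, t, ht, hrun⟩ : ∃ ext t,
        ReflTransGen Advance (List.replicate L.length YSym.yp ++ ofBits t)
          (ofBits ext ++ List.replicate L.length YSym.yp) ∧
        yRun b (g ++ E ++ ext) = (true, []) := by
      cases L with
      | nil =>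
        obtain ⟨ext, hext⟩ := exists_yRun_append_eq b (g ++ E)
        exact ⟨ext, ext, by simpa using .refl, hext⟩
      | cons c L =>
        obtain ⟨z, hz⟩ := exists_yRun_append_replicate_eq (hE c (by simp) b g hL.rel)
        exact ⟨_, _, reflTransGen_advance_replicate_yp _ z, hz⟩
    refine ⟨u ++ t, yOut b (g ++ E ++ ext),
      reflTransGen_advance_toWord_cons hmove ht hrun, ?_⟩
    rintro x hx a h hc
    obtain rfl : x = (b, g) := by simpa using hx.symm
    simpa only [hrun] using hc.append_yOut (congrArg Prod.snd hrun)

theorem toWord_cons_bit (x : Bool) (g₀ : List Bool) (L : List (Bool × List Bool)) :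
    toWord (x :: g₀) L = (if x then YSym.b1 else YSym.b0) :: toWord g₀ L := by
  cases L <;> rfl

theorem exists_toWord_eq (w : List YSym) :
    ∃ g₀ L, toWord g₀ L = w ∧ L.length = w.countP (fun a => isY a) := by
  induction w with
  | nil => exact ⟨[], [], rfl, rfl⟩
  | cons x w ih =>
    obtain ⟨g₀, L, rfl, hlen⟩ := ih
    cases x
    · exact ⟨false :: g₀, L, toWord_cons_bit .., by simpa [isY] using hlen⟩
    · exact ⟨true :: g₀, L, toWord_cons_bit .., by simpa [isY] using hlen⟩
    · exact ⟨[], (true, g₀) :: L, rfl, by simpa [isY] using hlen⟩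
    · exact ⟨[], (false, g₀) :: L, rfl, by simpa [isY] using hlen⟩

theorem HasCancel.append_left {w : List YSym} (h : HasCancel w) (P : List YSym) :
    HasCancel (P ++ w) := by
  obtain ⟨u, v, rfl | rfl⟩ := h
  · exact ⟨P ++ u, v, .inl (by simp)⟩
  · exact ⟨P ++ u, v, .inr (by simp)⟩

theorem PotentialCancellation.append_left {j : ℕ} {w : List YSym}
    (h : PotentialCancellation j w) (P : List YSym) :
    PotentialCancellation (P.countP (fun a => isY a) + j) (P ++ w) := by
  obtain ⟨w', hw', hc⟩ := h
  exact ⟨P ++ w', by simpa using reflTransGen_advanceAt_frame hw' P [], hc.append_left P⟩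

theorem potentialCancellation_zero_toWord {a b : Bool} {h : List Bool} (hn : ¬ NoClash a h b)
    (g₀ g : List Bool) (L : List (Bool × List Bool)) :
    PotentialCancellation 0 (toWord g₀ ((a, h) :: (b, g) :: L)) := by
  rw [NoClash, Classical.not_imp] at hn
  have hr : yRun a h = (!b, []) := Prod.ext (Bool.eq_not_iff.mpr hn.2) hn.1
  have hrun := reflTransGen_advanceAt_frame (reflTransGen_advanceAt_zero_yRun a h) (ofBits g₀)
    (ySym b :: toWord g L)
  rw [hr] at hrun
  refine ⟨_, by simpa [toWord] using hrun, ?_⟩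
  cases b
  · exact ⟨ofBits g₀ ++ ofBits (yOut a h), toWord g L, .inl (by simp [ySym, ofBits])⟩
  · exact ⟨ofBits g₀ ++ ofBits (yOut a h), toWord g L, .inr (by simp [ySym, ofBits])⟩

theorem isChain_noClash_of_forall_not_potentialCancellation {g₀ : List Bool}
    {L : List (Bool × List Bool)} (h : ∀ j, ¬ PotentialCancellation j (toWord g₀ L)) :
    L.IsChain fun x y => NoClash x.1 x.2 y.1 := by
  induction L generalizing g₀ with
  | nil => exact .nil
  | cons x L ih =>
    obtain ⟨a, g⟩ := x
    cases L with
    | nil => exact .singleton _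
    | cons y L =>
      refine .cons_cons (by_contra fun hn => h 0 (potentialCancellation_zero_toWord hn g₀ _ _))
        (ih fun j hj => h _ (by simpa [toWord] using hj.append_left (ofBits g₀ ++ [ySym a])))

/-- if Λ has no potential cancellations and n occurrences of y±, then
there is a binary word u such that Λ·u can be advanced to s·yⁿ for some binary word s. -/
theorem advance_to_power_of_y (Λ : List YSym)
    (hΛ : ∀ j, ¬ PotentialCancellation j Λ) :
    ∃ u s : List Bool,
      Relation.ReflTransGen Advance (Λ ++ ofBits u)
        (ofBits s ++ List.replicate (Λ.countP (fun a => isY a)) YSym.yp) := by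
  obtain ⟨g₀, L, rfl, hlen⟩ := exists_toWord_eq Λ
  obtain ⟨u, E, hmove, -⟩ :=
    exists_advance_toWord (isChain_noClash_of_forall_not_potentialCancellation hΛ)
  exact ⟨u, g₀ ++ E, hlen ▸ hmove g₀⟩
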